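/- arXiv:1410.8527 — 2 statements merged into one kernel-verified Lean document; each statement's English description precedes it below -/
import Mathlib

section
/- With v_0 = v_0(r) > 0 and Ψ := -h_1 - U_1 - v_0 A_φ + 2 r^2 v_0^2 h_0 - (3/2) h_0^2 - 4 h_0 U_0 - 2 U_0^2 - ∫^r s^3 v_0(s)^4 ds, the pair of 1PN equations ∂_z Ψ = 0 and ∂_r Ψ + 2 r v_0 v_1 + A_φ ∂_r v_0 - 2 r^2 (∂_r v_0^2) h_0 = 0 is equivalent, given the Newtonian Euler equations ∂_z h_0 = -∂_z U_0 and ∂_r h_0 - r v_0^2 = -∂_r U_0, to the 1PN Euler equations: -∂_z h_1 - ∂_z U_1 - v_0 ∂_z A_φ - (h_0 + 2 r^2 v_0^2) ∂_z U_0 = 0 and -∂_r h_1 - ∂_r U_1 + 2 r v_0 v_1 - v_0 ∂_r A_φ + r^3 v_0^4 + r v_0^2 h_0 - 4 r v_0^2 U_0 - (h_0 + 2 r^2 v_0^2) ∂_r U_0 = 0. -/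
noncomputable def pr (f : ℝ × ℝ → ℝ) (p : ℝ × ℝ) : ℝ := fderiv ℝ f p (1, 0)
noncomputable def pz (f : ℝ × ℝ → ℝ) (p : ℝ × ℝ) : ℝ := fderiv ℝ f p (0, 1)

/-!
Differentiating `Ψ`, the Newtonian part `2 r² v₀² h₀ - (3/2) h₀² - 4 h₀ U₀ - 2 U₀²` contributes
`(2 r² v₀² - 3 h₀ - 4 U₀) ∂h₀ - 4 (h₀ + U₀) ∂U₀`, and `∂_r ∫^r s³ v₀⁴ = r³ v₀⁴`. Hence in each
direction the `Ψ`-equation equals the corresponding 1PN Euler equation plus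
`2 r² v₀² - 3 h₀ - 4 U₀` times the residual of the Newtonian Euler equation, which vanishes.
-/

theorem HasDerivAt.hasFDerivAt_comp_fst {E : Type*} [NormedAddCommGroup E] [NormedSpace ℝ E]
    {g : ℝ → ℝ} {g' : ℝ} {p : ℝ × E} (hg : HasDerivAt g g' p.1) :
    HasFDerivAt (fun q : ℝ × E => g q.1) (g' • ContinuousLinearMap.fst ℝ ℝ E) p :=
  hg.comp_hasFDerivAt p hasFDerivAt_fst

noncomputable def psi1PN (v0 F : ℝ → ℝ) (h0 h1 U0 U1 Aφ : ℝ × ℝ → ℝ) (q : ℝ × ℝ) : ℝ :=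
  -h1 q - U1 q - v0 q.1 * Aφ q + 2 * q.1 ^ 2 * (v0 q.1) ^ 2 * h0 q
    - 3 / 2 * (h0 q) ^ 2 - 4 * h0 q * U0 q - 2 * (U0 q) ^ 2 - F q.1

section

variable {v0 F : ℝ → ℝ} {h0 h1 U0 U1 Aφ : ℝ × ℝ → ℝ} {p : ℝ × ℝ} {v0' F' : ℝ}
  (hv0 : HasDerivAt v0 v0' p.1) (hF : HasDerivAt F F' p.1)
  (hh0 : DifferentiableAt ℝ h0 p) (hh1 : DifferentiableAt ℝ h1 p)
  (hU0 : DifferentiableAt ℝ U0 p) (hU1 : DifferentiableAt ℝ U1 p)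
  (hAφ : DifferentiableAt ℝ Aφ p)
include hv0 hF hh0 hh1 hU0 hU1 hAφ

theorem fderiv_psi1PN_apply (w : ℝ × ℝ) :
    fderiv ℝ (psi1PN v0 F h0 h1 U0 U1 Aφ) p w =
      -fderiv ℝ h1 p w - fderiv ℝ U1 p w - v0' * w.1 * Aφ p - v0 p.1 * fderiv ℝ Aφ p w
        + (4 * p.1 * v0 p.1 ^ 2 + 4 * p.1 ^ 2 * v0 p.1 * v0') * w.1 * h0 p
        + (2 * p.1 ^ 2 * v0 p.1 ^ 2 - 3 * h0 p - 4 * U0 p) * fderiv ℝ h0 p w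
        - 4 * (h0 p + U0 p) * fderiv ℝ U0 p w - F' * w.1 := by
  have hV := hv0.hasFDerivAt_comp_fst
  have hΨ : HasFDerivAt (psi1PN v0 F h0 h1 U0 U1 Aφ) _ p :=
    ((((((hh1.hasFDerivAt.neg.sub hU1.hasFDerivAt).sub (hV.mul hAφ.hasFDerivAt)).add
      ((((hasFDerivAt_fst.pow 2).const_mul 2).mul (hV.pow 2)).mul hh0.hasFDerivAt)).sub
      ((hh0.hasFDerivAt.pow 2).const_mul (3 / 2))).sub
      ((hh0.hasFDerivAt.const_mul 4).mul hU0.hasFDerivAt)).sub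
      ((hU0.hasFDerivAt.pow 2).const_mul 2)).sub hF.hasFDerivAt_comp_fst
  rw [hΨ.fderiv]
  simp only [Pi.mul_apply, Nat.add_one_sub_one, pow_one, nsmul_eq_mul, Nat.cast_ofNat, smul_add,
    sub_apply, add_apply, neg_apply, smul_apply, smul_eq_mul, ContinuousLinearMap.coe_fst']
  ring

theorem pz_psi1PN :
    pz (psi1PN v0 F h0 h1 U0 U1 Aφ) p =
      (-pz h1 p - pz U1 p - v0 p.1 * pz Aφ p - (h0 p + 2 * p.1 ^ 2 * (v0 p.1) ^ 2) * pz U0 p)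
        + (2 * p.1 ^ 2 * v0 p.1 ^ 2 - 3 * h0 p - 4 * U0 p) * (pz h0 p + pz U0 p) := by
  unfold pz
  rw [fderiv_psi1PN_apply hv0 hF hh0 hh1 hU0 hU1 hAφ]
  ring

theorem pr_psi1PN_add (v1 : ℝ × ℝ → ℝ) (hF' : F' = p.1 ^ 3 * (v0 p.1) ^ 4) :
    pr (psi1PN v0 F h0 h1 U0 U1 Aφ) p + 2 * p.1 * v0 p.1 * v1 p + Aφ p * v0'
        - 2 * p.1 ^ 2 * (2 * v0 p.1 * v0') * h0 p =
      (-pr h1 p - pr U1 p + 2 * p.1 * v0 p.1 * v1 p - v0 p.1 * pr Aφ p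
        + p.1 ^ 3 * (v0 p.1) ^ 4 + p.1 * (v0 p.1) ^ 2 * h0 p - 4 * p.1 * (v0 p.1) ^ 2 * U0 p
        - (h0 p + 2 * p.1 ^ 2 * (v0 p.1) ^ 2) * pr U0 p)
        + (2 * p.1 ^ 2 * v0 p.1 ^ 2 - 3 * h0 p - 4 * U0 p)
          * (pr h0 p - p.1 * (v0 p.1) ^ 2 + pr U0 p) := by
  unfold pr
  rw [fderiv_psi1PN_apply hv0 hF hh0 hh1 hU0 hU1 hAφ, hF']
  ring

end

theorem psi_equations_equivalent_to_1PN_euler_general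
    (v0 : ℝ → ℝ) (h0 h1 U0 U1 Aφ v1 : ℝ × ℝ → ℝ) (F : ℝ → ℝ)
    (hv0 : ContDiff ℝ 1 v0) (hh0 : ContDiff ℝ 1 h0) (hh1 : ContDiff ℝ 1 h1)
    (hU0 : ContDiff ℝ 1 U0) (hU1 : ContDiff ℝ 1 U1) (hAφ : ContDiff ℝ 1 Aφ)
    (hF : ∀ r : ℝ, 0 < r → HasDerivAt F (r ^ 3 * (v0 r) ^ 4) r)
    (Ψ : ℝ × ℝ → ℝ)
    (hΨ : ∀ p : ℝ × ℝ, Ψ p =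
      -h1 p - U1 p - v0 p.1 * Aφ p + 2 * p.1 ^ 2 * (v0 p.1) ^ 2 * h0 p
        - 3 / 2 * (h0 p) ^ 2 - 4 * h0 p * U0 p - 2 * (U0 p) ^ 2 - F p.1) :
    ∀ p : ℝ × ℝ, 0 < p.1 →
      -- Newtonian Euler equations at `p`:
      pz h0 p = -pz U0 p →
      pr h0 p - p.1 * (v0 p.1) ^ 2 = -pr U0 p →
      -- equivalence of the `Ψ`-form with the 1PN Euler equations:
      ((pz Ψ p = 0 ∧
          pr Ψ p + 2 * p.1 * v0 p.1 * v1 p + Aφ p * deriv v0 p.1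
            - 2 * p.1 ^ 2 * deriv (fun s => (v0 s) ^ 2) p.1 * h0 p = 0)
        ↔
        ((-pz h1 p - pz U1 p - v0 p.1 * pz Aφ p
            - (h0 p + 2 * p.1 ^ 2 * (v0 p.1) ^ 2) * pz U0 p = 0) ∧
          (-pr h1 p - pr U1 p + 2 * p.1 * v0 p.1 * v1 p - v0 p.1 * pr Aφ p
            + p.1 ^ 3 * (v0 p.1) ^ 4 + p.1 * (v0 p.1) ^ 2 * h0 p
            - 4 * p.1 * (v0 p.1) ^ 2 * U0 p
            - (h0 p + 2 * p.1 ^ 2 * (v0 p.1) ^ 2) * pr U0 p = 0))) := by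
  intro p hp hz hr
  obtain rfl : Ψ = psi1PN v0 F h0 h1 U0 U1 Aφ := funext hΨ
  have hv0' := (hv0.differentiable one_ne_zero p.1).hasDerivAt
  have hd {f : ℝ × ℝ → ℝ} (hf : ContDiff ℝ 1 f) : DifferentiableAt ℝ f p :=
    hf.differentiable one_ne_zero p
  have hderiv_sq : deriv (fun s => v0 s ^ 2) p.1 = 2 * v0 p.1 * deriv v0 p.1 := by
    simpa using (hv0'.fun_pow 2).deriv
  have hz_residual : pz h0 p + pz U0 p = 0 := by linarith
  have hr_residual : pr h0 p - p.1 * v0 p.1 ^ 2 + pr U0 p = 0 := by linarith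
  rw [hderiv_sq,
    pz_psi1PN hv0' (hF p.1 hp) (hd hh0) (hd hh1) (hd hU0) (hd hU1) (hd hAφ), hz_residual,
    pr_psi1PN_add hv0' (hF p.1 hp) (hd hh0) (hd hh1) (hd hU0) (hd hU1) (hd hAφ) v1 rfl,
    hr_residual]
  simp only [mul_zero, add_zero]

/-- with
`Ψ = -h₁ - U₁ - v₀ A_φ + 2 r² v₀² h₀ - (3/2) h₀² - 4 h₀ U₀ - 2 U₀² - ∫^r s³ v₀(s)⁴ ds`,
the pair `∂_z Ψ = 0`, `∂_r Ψ + 2 r v₀ v₁ + A_φ ∂_r v₀ - 2 r² (∂_r v₀²) h₀ = 0`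
is equivalent, given the Newtonian Euler equations, to the 1PN Euler equations. -/
theorem psi_equations_equivalent_to_1PN_euler
    (v0 : ℝ → ℝ) (h0 h1 U0 U1 Aφ v1 : ℝ × ℝ → ℝ) (F : ℝ → ℝ)
    (hv0 : ContDiff ℝ 1 v0) (hh0 : ContDiff ℝ 1 h0) (hh1 : ContDiff ℝ 1 h1)
    (hU0 : ContDiff ℝ 1 U0) (hU1 : ContDiff ℝ 1 U1) (hAφ : ContDiff ℝ 1 Aφ)
    (hF : ∀ r : ℝ, 0 < r → HasDerivAt F (r ^ 3 * (v0 r) ^ 4) r)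
    (hv0pos : ∀ r : ℝ, 0 < r → 0 < v0 r)
    (Ψ : ℝ × ℝ → ℝ)
    (hΨ : ∀ p : ℝ × ℝ, Ψ p =
      -h1 p - U1 p - v0 p.1 * Aφ p + 2 * p.1 ^ 2 * (v0 p.1) ^ 2 * h0 p
        - 3 / 2 * (h0 p) ^ 2 - 4 * h0 p * U0 p - 2 * (U0 p) ^ 2 - F p.1) :
    ∀ p : ℝ × ℝ, 0 < p.1 →
      -- Newtonian Euler equations at `p`:
      pz h0 p = -pz U0 p →
      pr h0 p - p.1 * (v0 p.1) ^ 2 = -pr U0 p →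
      -- equivalence of the `Ψ`-form with the 1PN Euler equations:
      ((pz Ψ p = 0 ∧
          pr Ψ p + 2 * p.1 * v0 p.1 * v1 p + Aφ p * deriv v0 p.1
            - 2 * p.1 ^ 2 * deriv (fun s => (v0 s) ^ 2) p.1 * h0 p = 0)
        ↔
        ((-pz h1 p - pz U1 p - v0 p.1 * pz Aφ p
            - (h0 p + 2 * p.1 ^ 2 * (v0 p.1) ^ 2) * pz U0 p = 0) ∧
          (-pr h1 p - pr U1 p + 2 * p.1 * v0 p.1 * v1 p - v0 p.1 * pr Aφ p
            + p.1 ^ 3 * (v0 p.1) ^ 4 + p.1 * (v0 p.1) ^ 2 * h0 p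
            - 4 * p.1 * (v0 p.1) ^ 2 * U0 p
            - (h0 p + 2 * p.1 ^ 2 * (v0 p.1) ^ 2) * pr U0 p = 0))) :=
  psi_equations_equivalent_to_1PN_euler_general v0 h0 h1 U0 U1 Aφ v1 F hv0 hh0 hh1 hU0 hU1 hAφ hF Ψ
    hΨ
end

section
/- Let A: R^3 → R be a C^2 axially symmetric function (A = A_φ(r,z)) satisfying ΔA - (2/r) ∂_r A = -16π G r^2 ρ_0 v_0 on R^3, with ρ_0 ≥ 0, v_0 ≥ 0 continuous of compact support, and A(x) → 0 as |x| → ∞. Then A ≥ 0 everywhere. -/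
noncomputable def prr (f : ℝ × ℝ → ℝ) (p : ℝ × ℝ) : ℝ := pr (pr f) p
noncomputable def pzz (f : ℝ × ℝ → ℝ) (p : ℝ × ℝ) : ℝ := pz (pz f) p

/-!
A minimum principle for `L = Δ - (2/r) ∂_r`. If `A p < 0`, take `R` so large that
`|A| < -A p / 2` outside the disc of radius `R`, and `ε` so small that `ε r³ ≤ -A p / 4` on it.
Then `B = A - ε r³` satisfies `B p ≤ A p < 0`, vanishes on the axis and exceeds `B p` on the
circle `‖(r, z)‖ = R`, so it has a local minimum `q` inside the half-disc `r > 0`. There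
`∂_r B = 0` and `∂_r² B, ∂_z² B ≥ 0`, hence `L B q ≥ 0`; but `L (r³) = 3r`, so
`L B q = L A q - 3 ε r < 0` because the source term `-16πG r² ρ₀ v₀` is `≤ 0`.
-/

open Filter Topology

theorem IsLocalMin.deriv_deriv_nonneg {f : ℝ → ℝ} {x : ℝ} (h : IsLocalMin f x)
    (hc : ContinuousAt f x) : 0 ≤ deriv (deriv f) x := by
  -- otherwise the second-derivative test makes `x` a local maximum too, so `f` is locally constant
  by_contra! hneg
  have hmax : IsLocalMax f x := isLocalMax_of_deriv_deriv_neg hneg h.deriv_eq_zero hc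
  have hconst : f =ᶠ[𝓝 x] fun _ => f x := by
    filter_upwards [h, hmax] with y hy₁ hy₂ using le_antisymm hy₂ hy₁
  have hzero : deriv (deriv f) x = 0 := by
    rw [hconst.deriv.deriv_eq]
    simp
  exact hneg.ne hzero

theorem IsLocalMin.fderiv_fderiv_apply_nonneg {E : Type*} [NormedAddCommGroup E]
    [NormedSpace ℝ E] {F : E → ℝ} (hF : ContDiff ℝ 2 F) {q : E} (h : IsLocalMin F q) (v : E) :
    0 ≤ fderiv ℝ (fun p => fderiv ℝ F p v) q v := by
  set ℓ : ℝ → E := fun t => q + t • v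
  have hℓ : ∀ t, HasDerivAt ℓ v t := fun t =>
    (((hasDerivAt_id t).smul_const v).const_add q).congr_deriv (one_smul ℝ v)
  have hℓ0 : ℓ 0 = q := by simp [ℓ]
  have hF' : ContDiff ℝ 1 (fun p => fderiv ℝ F p v) :=
    (hF.fderiv_right (by norm_num)).clm_apply contDiff_const
  have hderiv : deriv (F ∘ ℓ) = fun t => fderiv ℝ F (ℓ t) v := funext fun t =>
    ((hF.differentiable two_ne_zero (ℓ t)).hasFDerivAt.comp_hasDerivAt t (hℓ t)).deriv
  have hderiv2 :
      deriv (fun t => fderiv ℝ F (ℓ t) v) 0 = fderiv ℝ (fun p => fderiv ℝ F p v) q v := by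
    have hd := (hF'.differentiable one_ne_zero (ℓ 0)).hasFDerivAt.comp_hasDerivAt 0 (hℓ 0)
    rw [hℓ0] at hd
    exact hd.deriv
  have hmin : IsLocalMin (F ∘ ℓ) 0 := (hℓ0 ▸ h).comp_continuous (hℓ 0).continuousAt
  have := hmin.deriv_deriv_nonneg (hF.continuous.continuousAt.comp (hℓ 0).continuousAt)
  rwa [hderiv, hderiv2] at this

section PartialDerivatives

variable {f g : ℝ × ℝ → ℝ} {p : ℝ × ℝ}

theorem pr_sub (hf : DifferentiableAt ℝ f p) (hg : DifferentiableAt ℝ g p) :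
    pr (fun q => f q - g q) p = pr f p - pr g p := by
  simp [pr, fderiv_fun_sub hf hg]

theorem pz_sub (hf : DifferentiableAt ℝ f p) (hg : DifferentiableAt ℝ g p) :
    pz (fun q => f q - g q) p = pz f p - pz g p := by
  simp [pz, fderiv_fun_sub hf hg]

theorem hasFDerivAt_comp_fst {h : ℝ → ℝ} (hh : DifferentiableAt ℝ h p.1) :
    HasFDerivAt (fun q : ℝ × ℝ => h q.1) (deriv h p.1 • ContinuousLinearMap.fst ℝ ℝ ℝ) p :=
  hh.hasDerivAt.comp_hasFDerivAt p hasFDerivAt_fst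

theorem pr_comp_fst {h : ℝ → ℝ} (hh : DifferentiableAt ℝ h p.1) :
    pr (fun q => h q.1) p = deriv h p.1 := by
  simp [pr, (hasFDerivAt_comp_fst hh).fderiv]

theorem pz_comp_fst {h : ℝ → ℝ} (hh : DifferentiableAt ℝ h p.1) :
    pz (fun q => h q.1) p = 0 := by
  simp [pz, (hasFDerivAt_comp_fst hh).fderiv]

theorem ContDiff.pr {n : WithTop ℕ∞} (hf : ContDiff ℝ (n + 1) f) : ContDiff ℝ n (pr f) :=
  (hf.fderiv_right le_rfl).clm_apply contDiff_const

end PartialDerivatives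

/-- `Δ - (2/r) ∂_r` acting on axially symmetric functions of `(r, z) = (p.1, p.2)`. -/
noncomputable def gravitomagneticOp (f : ℝ × ℝ → ℝ) (p : ℝ × ℝ) : ℝ :=
  (prr f p + (1 / p.1) * pr f p + pzz f p) - (2 / p.1) * pr f p

theorem IsLocalMin.gravitomagneticOp_nonneg {f : ℝ × ℝ → ℝ} (hf : ContDiff ℝ 2 f) {p : ℝ × ℝ}
    (h : IsLocalMin f p) : 0 ≤ gravitomagneticOp f p := by
  have hpr : pr f p = 0 := by simp [pr, h.fderiv_eq_zero]
  have hprr : 0 ≤ prr f p := h.fderiv_fderiv_apply_nonneg hf (1, 0)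
  have hpzz : 0 ≤ pzz f p := h.fderiv_fderiv_apply_nonneg hf (0, 1)
  rw [gravitomagneticOp, hpr]
  linarith

theorem gravitomagneticOp_sub_cube {f : ℝ × ℝ → ℝ} (hf : ContDiff ℝ 2 f) (ε : ℝ) {p : ℝ × ℝ}
    (hp : p.1 ≠ 0) :
    gravitomagneticOp (fun q => f q - ε * q.1 ^ 3) p = gravitomagneticOp f p - 3 * ε * p.1 := by
  have hf1 : Differentiable ℝ f := hf.differentiable two_ne_zero
  have hpr : pr (fun q => f q - ε * q.1 ^ 3) = fun q => pr f q - 3 * ε * q.1 ^ 2 := by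
    funext q
    rw [pr_sub (hf1 q) (by fun_prop), pr_comp_fst (h := fun r => ε * r ^ 3) (by fun_prop),
      ((hasDerivAt_pow 3 q.1).const_mul ε).deriv]
    ring
  have hpz : pz (fun q => f q - ε * q.1 ^ 3) = pz f := by
    funext q
    rw [pz_sub (hf1 q) (by fun_prop), pz_comp_fst (h := fun r => ε * r ^ 3) (by fun_prop), sub_zero]
  have hprr : prr (fun q => f q - ε * q.1 ^ 3) p = prr f p - 6 * ε * p.1 := by
    rw [prr, hpr, pr_sub ((hf.pr (n := 1)).differentiable one_ne_zero p) (by fun_prop),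
      pr_comp_fst (h := fun r => 3 * ε * r ^ 2) (by fun_prop),
      ((hasDerivAt_pow 2 p.1).const_mul (3 * ε)).deriv, prr]
    ring
  have hpzz : pzz (fun q => f q - ε * q.1 ^ 3) p = pzz f p := by rw [pzz, hpz, pzz]
  simp only [gravitomagneticOp, hprr, hpzz, hpr]
  field_simp
  ring

theorem exists_isLocalMin_of_lt_on_halfDisc_boundary {B : ℝ × ℝ → ℝ} (hB : Continuous B)
    {R : ℝ} {p : ℝ × ℝ} (hp : 0 ≤ p.1) (hpR : ‖p‖ ≤ R)
    (hbdry : ∀ q : ℝ × ℝ, 0 ≤ q.1 → ‖q‖ ≤ R → q.1 = 0 ∨ ‖q‖ = R → B p < B q) :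
    ∃ q : ℝ × ℝ, 0 < q.1 ∧ IsLocalMin B q := by
  have hK : IsCompact ({q : ℝ × ℝ | 0 ≤ q.1} ∩ Metric.closedBall 0 R) :=
    (isCompact_closedBall 0 R).inter_left (isClosed_le continuous_const continuous_fst)
  have hU : IsOpen ({q : ℝ × ℝ | 0 < q.1} ∩ Metric.ball 0 R) :=
    (isOpen_lt continuous_const continuous_fst).inter Metric.isOpen_ball
  refine (hK.exists_isLocalMin_mem_open
    (Set.inter_subset_inter (Set.ofPred_subset_ofPred.mpr fun _ => le_of_lt)
      Metric.ball_subset_closedBall)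
    hB.continuousOn ⟨hp, mem_closedBall_zero_iff.mpr hpR⟩ ?_ hU).imp fun q hq => ⟨hq.1.1, hq.2⟩
  rintro q ⟨⟨hq1, hqR⟩, hqU⟩
  rw [mem_closedBall_zero_iff] at hqR
  simp only [Set.mem_inter_iff, Set.mem_ofPred_eq, mem_ball_zero_iff, not_and_or, not_lt] at hqU
  exact hbdry q hq1 hqR (hqU.imp (le_antisymm · hq1) (le_antisymm hqR ·))

theorem exists_radius_of_tendsto_cocompact {E F : Type*} [NormedAddCommGroup E] [ProperSpace E]
    [NormedAddCommGroup F] {f : E → F} (hf : Tendsto f (cocompact E) (𝓝 0)) (p : E) {δ : ℝ}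
    (hδ : 0 < δ) : ∃ R, ‖p‖ < R ∧ ∀ q, R ≤ ‖q‖ → ‖f q‖ < δ := by
  have hev : ∀ᶠ q in comap norm atTop, ‖f q‖ < δ := by
    rw [comap_norm_atTop, Metric.cobounded_eq_cocompact]
    simpa using hf.eventually (Metric.ball_mem_nhds 0 hδ)
  obtain ⟨R, hR⟩ := eventually_atTop.mp (eventually_comap.mp hev)
  exact ⟨max R (‖p‖ + 1), by simp, fun q hq => hR _ (le_of_max_le_left hq) q rfl⟩

theorem sub_cube_lt_on_halfDisc_boundary {A : ℝ × ℝ → ℝ} (haxis : ∀ z : ℝ, A (0, z) = 0)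
    {p : ℝ × ℝ} (hp : 0 ≤ p.1) (hAp : A p < 0) {ε R : ℝ} (hε : 0 < ε)
    (hεR : ε * R ^ 3 ≤ -A p / 4) (hR : ∀ q : ℝ × ℝ, R ≤ ‖q‖ → ‖A q‖ < -A p / 2) :
    ∀ z : ℝ × ℝ, 0 ≤ z.1 → ‖z‖ ≤ R → z.1 = 0 ∨ ‖z‖ = R →
      A p - ε * p.1 ^ 3 < A z - ε * z.1 ^ 3 := by
  have hεp : 0 ≤ ε * p.1 ^ 3 := mul_nonneg hε.le (pow_nonneg hp 3)
  rintro z hz hzR (hz0 | hzR)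
  · rw [show z = (0, z.2) from Prod.ext hz0 rfl, haxis]
    simp only [zero_pow three_ne_zero, mul_zero, sub_zero]
    linarith
  · have hAz : A p / 2 < A z := by
      have := hR z hzR.ge
      rw [Real.norm_eq_abs, abs_lt] at this
      linarith
    have hz1 : z.1 ≤ R := hzR ▸ (le_abs_self z.1).trans (norm_fst_le z)
    have hcube : ε * z.1 ^ 3 ≤ ε * R ^ 3 := by gcongr
    linarith

theorem gravitomagnetic_potential_nonneg_general
    (G : ℝ) (hG : 0 < G)
    (A ρ0 v0 : ℝ × ℝ → ℝ)
    (hA : ContDiff ℝ 2 A)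
    (hρ0 : ∀ p, 0 ≤ ρ0 p) (hv0 : ∀ p, 0 ≤ v0 p)
    (haxis : ∀ z : ℝ, A (0, z) = 0)
    (hdecay : Filter.Tendsto A (Filter.cocompact (ℝ × ℝ)) (nhds 0))
    (heq : ∀ p : ℝ × ℝ, 0 < p.1 →
      (prr A p + (1 / p.1) * pr A p + pzz A p) - (2 / p.1) * pr A p
        = -16 * Real.pi * G * p.1 ^ 2 * ρ0 p * v0 p) :
    ∀ p : ℝ × ℝ, 0 ≤ p.1 → 0 ≤ A p := by
  intro p hp
  by_contra! hneg
  obtain ⟨R, hpR, hR⟩ := exists_radius_of_tendsto_cocompact hdecay p (by linarith : 0 < -A p / 2)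
  obtain ⟨ε, hε, hεR⟩ : ∃ ε > 0, ε * R ^ 3 = -A p / 4 := by
    have hR : 0 < R := (norm_nonneg p).trans_lt hpR
    exact ⟨-A p / (4 * R ^ 3), div_pos (by linarith) (by positivity), by field_simp⟩
  obtain ⟨q, hq, hmin⟩ := exists_isLocalMin_of_lt_on_halfDisc_boundary
    (B := fun q => A q - ε * q.1 ^ 3) (by fun_prop) hp hpR.le
    (sub_cube_lt_on_halfDisc_boundary haxis hp hneg hε hεR.le hR)
  have hLA : gravitomagneticOp A q ≤ 0 := by
    rw [gravitomagneticOp, heq q hq]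
    have hsrc : 0 ≤ 16 * Real.pi * G * q.1 ^ 2 * ρ0 q * v0 q :=
      mul_nonneg (mul_nonneg (by positivity) (hρ0 q)) (hv0 q)
    linarith
  have hLB := hmin.gravitomagneticOp_nonneg (hA.sub (by fun_prop))
  rw [gravitomagneticOp_sub_cube hA ε hq.ne'] at hLB
  linarith [mul_pos hε hq]

/-- an axially symmetric `C²` potential `A = A_φ(r,z)` solving
`ΔA - (2/r) ∂_r A = -16 π G r² ρ₀ v₀` (flat Laplacian
`Δ = ∂_r² + (1/r)∂_r + ∂_z²` on axially symmetric functions), with `ρ₀ ≥ 0`,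
`v₀ ≥ 0` continuous of compact support, `A` vanishing on the axis (regularity of
the 1-form `A_φ dφ` on `ℝ³`) and at infinity, is nonnegative. -/
theorem gravitomagnetic_potential_nonneg
    (G : ℝ) (hG : 0 < G)
    (A ρ0 v0 : ℝ × ℝ → ℝ)
    (hA : ContDiff ℝ 2 A)
    (hρ0cont : Continuous ρ0) (hv0cont : Continuous v0)
    (hρ0 : ∀ p, 0 ≤ ρ0 p) (hv0 : ∀ p, 0 ≤ v0 p)
    (hsupp : HasCompactSupport fun p => ρ0 p * v0 p)
    (haxis : ∀ z : ℝ, A (0, z) = 0)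
    (hdecay : Filter.Tendsto A (Filter.cocompact (ℝ × ℝ)) (nhds 0))
    (heq : ∀ p : ℝ × ℝ, 0 < p.1 →
      (prr A p + (1 / p.1) * pr A p + pzz A p) - (2 / p.1) * pr A p
        = -16 * Real.pi * G * p.1 ^ 2 * ρ0 p * v0 p) :
    ∀ p : ℝ × ℝ, 0 ≤ p.1 → 0 ≤ A p :=
  gravitomagnetic_potential_nonneg_general G hG A ρ0 v0 hA hρ0 hv0 haxis hdecay heq
end
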